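/- Let G be a finite group, K an algebraically closed field of characteristic zero, and z = Σ_{t∈S} c_t t a central element of K[G]. Then for any scalar r ∈ K, det(r·Id − ρ_z) = Π_{χ ∈ Irr(G)} (r − (Σ_{t∈S} c_t χ(t))/χ(1))^{χ(1)²}, where ρ_z is multiplication by z on K[G]. -/

import Mathlib

open Module
open scoped DirectSum

section Aux

variable {K A M N : Type*}

theorem aux_scc [CommSemiring K] [Semiring A] [Algebra K A]
    [AddCommMonoid M] [Module A M] [Module K M] [IsScalarTower K A M] :
    SMulCommClass A K M := by
  constructor
  intro a k m
  rw [← algebraMap_smul A k m, ← mul_smul, ← Algebra.commutes, mul_smul, algebraMap_smul]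

theorem aux_fd [Field K] [Ring A] [Algebra K A]
    [AddCommGroup M] [Module A M] [Module K M] [IsScalarTower K A M]
    [AddCommGroup N] [Module A N] [Module K N] [IsScalarTower K A N]
    [FiniteDimensional K M] [FiniteDimensional K N] :
    FiniteDimensional K (M →ₗ[A] N) := by
  haveI := aux_scc (K := K) (A := A) (M := N)
  exact FiniteDimensional.of_injective
    (LinearMap.restrictScalarsₗ K A M N K) (LinearMap.restrictScalars_injective K)

theorem schur_scalar [Field K] [IsAlgClosed K] [Ring A] [Algebra K A]
    [AddCommGroup M] [Module A M] [Module K M] [IsScalarTower K A M]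
    [FiniteDimensional K M] [IsSimpleModule A M] (f : M →ₗ[A] M) :
    ∃ μ : K, ∀ m, f m = μ • m := by
  haveI : Nontrivial M := IsSimpleModule.nontrivial A M
  obtain ⟨μ, hμ⟩ := Module.End.exists_eigenvalue (f.restrictScalars K : Module.End K M)
  obtain ⟨v, hv⟩ := hμ.exists_hasEigenvector
  haveI := aux_scc (K := K) (A := A) (M := M)
  set g : M →ₗ[A] M := f - μ • LinearMap.id with hg
  have hgv : g v = 0 := by
    simp only [hg, LinearMap.sub_apply, LinearMap.smul_apply, LinearMap.id_apply]
    rw [show f v = μ • v from hv.apply_eq_smul, sub_self]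
  have : g = 0 := by
    rcases g.bijective_or_eq_zero with h | h
    · exact absurd (h.injective (by simpa using hgv)) hv.2
    · exact h
  refine ⟨μ, fun m => ?_⟩
  have := congrFun (congrArg DFunLike.coe this) m
  simpa [hg, sub_eq_zero] using this

theorem finrank_end_simple [Field K] [IsAlgClosed K] [Ring A] [Algebra K A]
    [AddCommGroup M] [Module A M] [Module K M] [IsScalarTower K A M]
    [FiniteDimensional K M] [IsSimpleModule A M] :
    finrank K (M →ₗ[A] M) = 1 := by
  haveI := aux_scc (K := K) (A := A) (M := M)
  haveI : Nontrivial M := IsSimpleModule.nontrivial A M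
  refine finrank_eq_one (LinearMap.id : M →ₗ[A] M) ?_ ?_
  · intro h
    obtain ⟨m, hm⟩ := exists_ne (0 : M)
    exact hm (by simpa using congrFun (congrArg DFunLike.coe h) m)
  · intro f
    obtain ⟨μ, hμ⟩ := schur_scalar (K := K) f
    exact ⟨μ, by ext m; simp [hμ m]⟩

theorem finrank_hom_simple_iso [Field K] [IsAlgClosed K] [Ring A] [Algebra K A]
    [AddCommGroup M] [Module A M] [Module K M] [IsScalarTower K A M]
    [AddCommGroup N] [Module A N] [Module K N] [IsScalarTower K A N]
    [FiniteDimensional K M] [FiniteDimensional K N]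
    [IsSimpleModule A M] [IsSimpleModule A N] (e : M ≃ₗ[A] N) :
    finrank K (M →ₗ[A] N) = 1 := by
  haveI := aux_scc (K := K) (A := A) (M := M)
  haveI := aux_scc (K := K) (A := A) (M := N)
  rw [(LinearEquiv.congrLeft N K e).finrank_eq, finrank_end_simple (K := K)]

theorem finrank_hom_simple_empty [Field K] [Ring A] [Algebra K A]
    [AddCommGroup M] [Module A M] [Module K M] [IsScalarTower K A M]
    [AddCommGroup N] [Module A N] [Module K N] [IsScalarTower K A N]
    [IsSimpleModule A M] [IsSimpleModule A N] (h : IsEmpty (M ≃ₗ[A] N)) :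
    finrank K (M →ₗ[A] N) = 0 := by
  haveI := aux_scc (K := K) (A := A) (M := N)
  haveI : Subsingleton (M →ₗ[A] N) := by
    constructor
    intro f g
    have hz : ∀ u : M →ₗ[A] N, u = 0 := by
      intro u
      rcases u.bijective_or_eq_zero with hb | h0
      · exact (h.false (LinearEquiv.ofBijective u hb)).elim
      · exact h0
    rw [hz f, hz g]
  exact finrank_zero_of_subsingleton

theorem det_eigenbasis {R M ι : Type*} [CommRing R] [AddCommGroup M] [Module R M]
    [Fintype ι] [DecidableEq ι] (b : Basis ι R M) (d : ι → R) (f : M →ₗ[R] M)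
    (h : ∀ i, f (b i) = d i • b i) :
    LinearMap.det f = ∏ i, d i := by
  rw [← LinearMap.det_toMatrix b]
  have : LinearMap.toMatrix b b f = Matrix.diagonal d := by
    ext i j
    rw [LinearMap.toMatrix_apply, h j, map_smul]
    by_cases hij : i = j
    · subst hij; simp [Matrix.diagonal]
    · simp [Matrix.diagonal, hij, Finsupp.single_apply, Basis.repr_self]
  rw [this, Matrix.det_diagonal]

end Aux

set_option maxHeartbeats 2000000 in
/-- For the central element `z = ∑_{t ∈ S} c t • t` of `K[G]` (with `S`
closed under conjugation and `c` a class function) and any scalar `r ∈ K`,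
`det (r • Id - ρ_z) = ∏_χ (r - (∑_{t ∈ S} c t * χ t)/χ(1))^(χ(1)^2)`, the product
running over a complete set of pairwise non-isomorphic irreducible representations. -/
theorem charpoly_value_of_central_element
    (G : Type) [Group G] [Fintype G]
    (K : Type) [Field K] [IsAlgClosed K] [CharZero K]
    (ι : Type) [Fintype ι]
    (V : ι → Type) [∀ i, AddCommGroup (V i)] [∀ i, Module K (V i)]
    [∀ i, FiniteDimensional K (V i)]
    (ρ : ∀ i, Representation K G (V i))
    (hirr : ∀ i, IsSimpleModule (MonoidAlgebra K G) (ρ i).asModule)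
    (hdistinct : ∀ i j, i ≠ j →
      IsEmpty ((ρ i).asModule ≃ₗ[MonoidAlgebra K G] (ρ j).asModule))
    (hcomplete : ∀ (W : Type) [AddCommGroup W] [Module (MonoidAlgebra K G) W],
      IsSimpleModule (MonoidAlgebra K G) W →
        ∃ i, Nonempty (W ≃ₗ[MonoidAlgebra K G] (ρ i).asModule))
    (S : Finset G) (c : G → K)
    (hS : ∀ g : G, ∀ s ∈ S, g * s * g⁻¹ ∈ S)
    (hc : ∀ g : G, ∀ s ∈ S, c (g * s * g⁻¹) = c s)
    (z : MonoidAlgebra K G)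
    (hz : z = ∑ t ∈ S, MonoidAlgebra.single t (c t))
    (r : K) :
    LinearMap.det (r • (LinearMap.id : MonoidAlgebra K G →ₗ[K] MonoidAlgebra K G)
        - LinearMap.mulLeft K z) =
      ∏ i, (r - (∑ t ∈ S, c t * LinearMap.trace K (V i) ((ρ i) t)) /
        (Module.finrank K (V i) : K)) ^ (Module.finrank K (V i)) ^ 2 := by
  classical
  let A := MonoidAlgebra K G
  -- basic instances
  haveI : NeZero (Fintype.card G : K) := ⟨Nat.cast_ne_zero.mpr Fintype.card_ne_zero⟩
  haveI : FiniteDimensional K A := inferInstance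
  -- z is central
  have hzc : ∀ a : A, z * a = a * z := by
    have key : ∀ g : G, z * MonoidAlgebra.single g (1:K) = MonoidAlgebra.single g 1 * z := by
      intro g
      rw [hz, Finset.sum_mul, Finset.mul_sum]
      simp only [MonoidAlgebra.single_mul_single, mul_one, one_mul]
      refine Finset.sum_bij' (fun t _ => g⁻¹ * t * g) (fun t _ => g * t * g⁻¹) ?_ ?_ ?_ ?_ ?_
      · intro t ht
        have := hS g⁻¹ t ht
        simpa using this
      · intro t ht; exact hS g t ht
      · intro t ht; group
      · intro t ht; group
      · intro t ht
        have hcv : c (g⁻¹ * t * g) = c t := by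
          have := hc g⁻¹ t ht
          simpa using this
        rw [hcv]
        congr 1
        group
    intro a
    induction a using MonoidAlgebra.induction_linear with
    | zero => simp
    | add f g hf hg => rw [mul_add, add_mul, hf, hg]
    | single g b =>
        show z * MonoidAlgebra.single g b = MonoidAlgebra.single g b * z
        have h1 : MonoidAlgebra.single g b = b • MonoidAlgebra.single g (1:K) := by
          rw [MonoidAlgebra.smul_single', mul_one]
        rw [h1, mul_smul_comm, smul_mul_assoc, key]
  -- scalar towers on the asModules
  haveI tower_i : ∀ i, IsScalarTower K A ((ρ i).asModule) := fun i => by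
    constructor
    intro k a m
    show (ρ i).asAlgebraHom (k • a) m = k • (ρ i).asAlgebraHom a m
    rw [map_smul]; rfl
  haveI fd_i : ∀ i, FiniteDimensional K ((ρ i).asModule) := fun i =>
    inferInstanceAs (FiniteDimensional K (V i))
  have eV : ∀ i, (ρ i).asModule ≃ₗ[K] V i := fun i =>
    { (ρ i).asModuleEquiv with map_smul' := fun _ _ => rfl }
  -- degrees are nonzero
  set d : ι → ℕ := fun i => finrank K (V i) with hd
  have hdpos : ∀ i, 0 < d i := by
    intro i
    haveI := (hirr i).nontrivial
    haveI : Nontrivial (V i) := (eV i).symm.toEquiv.nontrivial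
    exact finrank_pos
  have hd0 : ∀ i, (d i : K) ≠ 0 := fun i => Nat.cast_ne_zero.mpr (hdpos i).ne'
  -- scalar action of z on each asModule
  set μ : ι → K := fun i => (∑ t ∈ S, c t * LinearMap.trace K (V i) ((ρ i) t)) / (d i : K)
    with hμdef
  have hμ : ∀ i (m : (ρ i).asModule), z • m = μ i • m := by
    intro i
    let mz : (ρ i).asModule →ₗ[A] (ρ i).asModule :=
      { toFun := fun m => z • m
        map_add' := fun x y => smul_add z x y
        map_smul' := fun a m => by
          simp only [RingHom.id_apply]
          rw [← mul_smul, hzc a, mul_smul] }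
    obtain ⟨ν, hν⟩ := schur_scalar (K := K) mz
    have hF : ((ρ i).asAlgebraHom z : V i →ₗ[K] V i) = ν • LinearMap.id := by
      ext v
      exact hν v
    have htr := congrArg (LinearMap.trace K (V i)) hF
    rw [map_smul, LinearMap.trace_id, smul_eq_mul] at htr
    have htrz : LinearMap.trace K (V i) ((ρ i).asAlgebraHom z)
        = ∑ t ∈ S, c t * LinearMap.trace K (V i) ((ρ i) t) := by
      rw [hz, map_sum, map_sum]
      refine Finset.sum_congr rfl fun t _ => ?_
      rw [Representation.asAlgebraHom_single, map_smul, smul_eq_mul]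
    have hνμ : ν = μ i := by
      have h1 : (∑ t ∈ S, c t * LinearMap.trace K (V i) ((ρ i) t)) = ν * (d i : K) := by
        rw [← htrz]; exact htr
      show ν = (∑ t ∈ S, c t * LinearMap.trace K (V i) ((ρ i) t)) / (d i : K)
      rw [h1, mul_div_assoc, div_self (hd0 i), mul_one]
    intro m
    have hm := hν m
    rw [hνμ] at hm
    exact hm
  -- the finite decomposition of the regular module
  have := (IsSemisimpleModule.finite_tfae (R := A) (M := A)).out 0 4
  obtain ⟨s, hfin, hindep, hsup, hsimple⟩ := this.mp inferInstance
  haveI := hfin.fintype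
  set W : s → Submodule A A := fun j => (j : Submodule A A) with hW
  haveI hsimpleW : ∀ j : s, IsSimpleModule A (W j) := fun j => hsimple _ j.2
  have hInt : DirectSum.IsInternal W := by
    apply DirectSum.isInternal_submodule_of_iSupIndep_of_iSup_eq_top
    · exact (sSupIndep_iff s).mp hindep
    · rw [← sSup_eq_iSup', hsup]
  haveI : ∀ j : s, FiniteDimensional K (W j) := fun j =>
    inferInstanceAs (FiniteDimensional K ((W j).restrictScalars K))
  -- classify each W j
  have hclass : ∀ j : s, ∃ i : ι, Nonempty (↥(W j) ≃ₗ[A] (ρ i).asModule) :=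
    fun j => hcomplete (W j) (hsimpleW j)
  choose cl hcl using hclass
  -- scalar action of z on each W j
  have hzW : ∀ (j : s) (w : A), w ∈ W j → z * w = μ (cl j) • w := by
    intro j w hw
    obtain ⟨e⟩ := hcl j
    set x : ↥(W j) := ⟨w, hw⟩ with hx
    have h1 : e (z • x) = z • e x := map_smul e z x
    have h2 : z • e x = μ (cl j) • e x := hμ (cl j) (e x)
    have h3 : (μ (cl j) • e x) = e (μ (cl j) • x) := by
      rw [← algebraMap_smul A (μ (cl j)) x, map_smul, algebraMap_smul]
    have : z • x = μ (cl j) • x := e.injective (by rw [h1, h2, h3])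
    have := congrArg Subtype.val this
    simpa using this
  -- dimensions of the W j
  have hdimW : ∀ j : s, finrank K (W j) = d (cl j) := by
    intro j
    obtain ⟨e⟩ := hcl j
    have e' := e.restrictScalars K
    rw [e'.finrank_eq, (eV (cl j)).finrank_eq]
  -- multiplicity count : #{j | cl j = i} = d i
  have hmult : ∀ i, (Finset.univ.filter (fun j => cl j = i)).card = d i := by
    intro i
    haveI := aux_scc (K := K) (A := A) (M := (ρ i).asModule)
    haveI : ∀ j : s, FiniteDimensional K (↥(W j) →ₗ[A] (ρ i).asModule) := fun j =>
      aux_fd (K := K)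
    have E1 : (A →ₗ[A] (ρ i).asModule) ≃ₗ[K] (ρ i).asModule :=
      LinearMap.ringLmapEquivSelf A K ((ρ i).asModule)
    have E2 : ((⨁ j : s, ↥(W j)) →ₗ[A] (ρ i).asModule) ≃ₗ[K] (A →ₗ[A] (ρ i).asModule) :=
      LinearEquiv.congrLeft _ K (LinearEquiv.ofBijective (DirectSum.coeLinearMap W) hInt)
    have E3 : ((∀ j : s, ↥(W j)) →ₗ[A] (ρ i).asModule) ≃ₗ[K]
        ((⨁ j : s, ↥(W j)) →ₗ[A] (ρ i).asModule) :=
      LinearEquiv.congrLeft _ K (DirectSum.linearEquivFunOnFintype A s (fun j => ↥(W j))).symm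
    have E4 : (∀ j : s, (↥(W j) →ₗ[A] (ρ i).asModule)) ≃ₗ[K]
        ((∀ j : s, ↥(W j)) →ₗ[A] (ρ i).asModule) :=
      LinearMap.lsum A (fun j : s => ↥(W j)) K
    have hrank : finrank K (∀ j : s, (↥(W j) →ₗ[A] (ρ i).asModule)) = d i := by
      rw [E4.finrank_eq, E3.finrank_eq, E2.finrank_eq, E1.finrank_eq, (eV i).finrank_eq]
    rw [Module.finrank_pi_fintype] at hrank
    have hterm : ∀ j : s, finrank K (↥(W j) →ₗ[A] (ρ i).asModule)
        = if cl j = i then 1 else 0 := by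
      intro j
      by_cases hji : cl j = i
      · rw [if_pos hji]
        obtain ⟨e⟩ := hcl j
        exact finrank_hom_simple_iso (K := K) (hji ▸ e)
      · rw [if_neg hji]
        refine finrank_hom_simple_empty (K := K) ?_
        constructor
        intro e
        obtain ⟨e'⟩ := hcl j
        exact (hdistinct (cl j) i (by exact fun h => hji h)).false (e'.symm.trans e)
    rw [Finset.sum_congr rfl (fun j _ => hterm j)] at hrank
    rw [Finset.card_filter]
    exact hrank
  -- K-linear identification of restrictScalars with the submodule
  have eRS : ∀ j : s, ((W j).restrictScalars K) ≃ₗ[K] ↥(W j) := fun j =>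
    { toFun := fun x => ⟨x.1, x.2⟩
      invFun := fun x => ⟨x.1, x.2⟩
      map_add' := fun x y => rfl
      map_smul' := fun k x => rfl
      left_inv := fun x => rfl
      right_inv := fun x => rfl }
  set n : s → ℕ := fun j => finrank K ((W j).restrictScalars K) with hn
  have hdimW' : ∀ j : s, n j = d (cl j) := fun j =>
    ((eRS j).finrank_eq).trans (hdimW j)
  -- collected eigenbasis
  have hIntK : DirectSum.IsInternal fun j : s => (W j).restrictScalars K := hInt
  let bW : ∀ j : s, Basis (Fin (n j)) K ((W j).restrictScalars K) :=
    fun j => Module.finBasis K _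
  let b := hIntK.collectedBasis bW
  have hdet : LinearMap.det (r • (LinearMap.id : MonoidAlgebra K G →ₗ[K] MonoidAlgebra K G)
      - LinearMap.mulLeft K z) = ∏ p : Σ j : s, Fin (n j), (r - μ (cl p.1)) := by
    refine det_eigenbasis b (fun p => r - μ (cl p.1)) _ (fun p => ?_)
    have hmem : (b p : A) ∈ W p.1 := hIntK.collectedBasis_mem bW p
    have hzb := hzW p.1 (b p) hmem
    show r • b p - z * b p = (r - μ (cl p.1)) • b p
    rw [hzb, sub_smul]
  rw [hdet, ← Finset.univ_sigma_univ, Finset.prod_sigma]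
  have hstep : ∀ j : s, (∏ _k : Fin (n j), (r - μ (cl j))) = (r - μ (cl j)) ^ d (cl j) := by
    intro j
    rw [Finset.prod_const, Finset.card_univ, Fintype.card_fin, hdimW' j]
  rw [Finset.prod_congr rfl (fun j _ => hstep j)]
  rw [← Finset.prod_fiberwise' Finset.univ cl (fun i => (r - μ i) ^ d i)]
  refine Finset.prod_congr rfl fun i _ => ?_
  rw [Finset.prod_const, hmult i, ← pow_mul, ← sq]
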